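/- Let d ≥ 1, let μ be a probability measure on ℝ^d with finite fourth moment, μ ≠ δ₀, and let B = ∫ xxᵀ dμ(x). Then the second order separation parameter satisfies (s(μ)/‖B‖_F)² ≤ 4[ λ₂(T_μ)/λ₁(T_μ) + (1 − ‖B‖_F²/λ₁(T_μ)) ]. -/

import Mathlib

open MeasureTheory
open scoped ENNReal RealInnerProductSpace Classical

noncomputable section

/-- The outer product `x xᵀ` of a vector in Euclidean space, as a matrix. -/
def outer {d : ℕ} (x : EuclideanSpace ℝ (Fin d)) : Matrix (Fin d) (Fin d) ℝ :=
  Matrix.of fun i j => x i * x j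

/-- The trace inner product `⟨A, B⟩ = Tr (A B)` on symmetric matrices. -/
def minner {d : ℕ} (A B : Matrix (Fin d) (Fin d) ℝ) : ℝ :=
  Matrix.trace (A * B)

/-- The Frobenius norm of a matrix. -/
def frobNorm {d : ℕ} (M : Matrix (Fin d) (Fin d) ℝ) : ℝ :=
  Real.sqrt (∑ i, ∑ j, (M i j) ^ 2)

/-- Entrywise integral of a matrix-valued function. -/
def mIntegral {d : ℕ} (μ : Measure (EuclideanSpace ℝ (Fin d)))
    (F : EuclideanSpace ℝ (Fin d) → Matrix (Fin d) (Fin d) ℝ) :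
    Matrix (Fin d) (Fin d) ℝ :=
  Matrix.of fun i j => ∫ x, F x i j ∂μ

/-- The fourth moment operator `T_μ (A) = ∫ ⟨A, xxᵀ⟩ xxᵀ dμ(x)`. -/
def fourthMomentOp {d : ℕ} (μ : Measure (EuclideanSpace ℝ (Fin d)))
    (A : Matrix (Fin d) (Fin d) ℝ) : Matrix (Fin d) (Fin d) ℝ :=
  mIntegral μ (fun x => minner A (outer x) • outer x)

/-- The second moment matrix `B = ∫ xxᵀ dμ(x)`. -/
def secondMoment {d : ℕ} (μ : Measure (EuclideanSpace ℝ (Fin d))) :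
    Matrix (Fin d) (Fin d) ℝ :=
  mIntegral μ outer

/-- `lam : ℕ → ℝ` lists the eigenvalues (with multiplicity) of the fourth moment operator
`T_μ`, viewed as an operator on the `d(d+1)/2`-dimensional inner product space of symmetric
matrices, in descending order, padded by `0` beyond index `d(d+1)/2`. -/
def IsEigenSeq {d : ℕ} (μ : Measure (EuclideanSpace ℝ (Fin d))) (lam : ℕ → ℝ) : Prop :=
  Antitone lam ∧ (∀ i, d * (d + 1) / 2 ≤ i → lam i = 0) ∧
  ∃ b : Fin (d * (d + 1) / 2) → Matrix (Fin d) (Fin d) ℝ,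
    (∀ i, (b i).IsSymm) ∧
    (∀ i j, minner (b i) (b j) = if i = j then 1 else 0) ∧
    (∀ A : Matrix (Fin d) (Fin d) ℝ, A.IsSymm → A ∈ Submodule.span ℝ (Set.range b)) ∧
    (∀ i : Fin (d * (d + 1) / 2), fourthMomentOp μ (b i) = lam i • b i)

/-- The second order separation parameter `s(μ)`. -/
def sep {d : ℕ} (μ : Measure (EuclideanSpace ℝ (Fin d))) : ℝ :=
  (1 / 2) * sSup { r : ℝ | ∃ μ₁ μ₂ : Measure (EuclideanSpace ℝ (Fin d)),
    IsProbabilityMeasure μ₁ ∧ IsProbabilityMeasure μ₂ ∧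
    μ = (2 : ℝ≥0∞)⁻¹ • μ₁ + (2 : ℝ≥0∞)⁻¹ • μ₂ ∧
    r = frobNorm (secondMoment μ₁ - secondMoment μ₂) }

/-- The standard Gaussian measure `N(0, I)` on `ℝ^d`. -/
def stdGaussian (d : ℕ) : Measure (EuclideanSpace ℝ (Fin d)) :=
  (Measure.pi fun _ : Fin d => ProbabilityTheory.gaussianReal 0 1).map
    (MeasurableEquiv.toLp 2 (Fin d → ℝ))

/-- The centered Gaussian measure `N(0, B)` on `ℝ^d` with positive semidefinite
covariance matrix `B`, obtained as the pushforward of `N(0, I)` by `B^{1/2}`. -/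
def gaussianCov {d : ℕ} (B : Matrix (Fin d) (Fin d) ℝ) :
    Measure (EuclideanSpace ℝ (Fin d)) :=
  if hB : B.PosSemidef then (stdGaussian d).map (fun x => Matrix.toEuclideanLin (hB.1.eigenvectorUnitary.1 *
    Matrix.diagonal ((RCLike.ofReal : ℝ → ℝ) ∘ (√·) ∘ hB.1.eigenvalues) *
    (star hB.1.eigenvectorUnitary : Matrix (Fin d) (Fin d) ℝ)) x)
  else 0

/-- The positive semidefinite square root `B^{1/2}` of a positive semidefinite matrix. -/
def psdSqrt {d : ℕ} (B : Matrix (Fin d) (Fin d) ℝ) : Matrix (Fin d) (Fin d) ℝ :=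
  if hB : B.PosSemidef then hB.1.eigenvectorUnitary.1 *
    Matrix.diagonal ((RCLike.ofReal : ℝ → ℝ) ∘ (√·) ∘ hB.1.eigenvalues) *
    (star hB.1.eigenvectorUnitary : Matrix (Fin d) (Fin d) ℝ) else 0

/-!
Write `B = ∫ xxᵀ dμ` and `B₁, B₂` for the second moments of the two halves of a splitting
`μ = (μ₁ + μ₂) / 2`, so that `B = (B₁ + B₂) / 2`. Since `B₁` and `B₂` are positive semidefinite,
`⟨B₁, B₂⟩ ≥ 0`, hence `‖B₁ - B₂‖² ≤ ‖B₁ + B₂‖² = 4 ‖B‖²`. On the other hand, for symmetric `A`,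
Jensen's inequality on each half gives
`⟨A, B⟩² + ⟨A, (B₁ - B₂) / 2⟩² ≤ ∫ ⟨A, xxᵀ⟩² dμ = ⟨A, T_μ A⟩ ≤ λ₂ ‖A‖² + (λ₁ - λ₂) ⟨A, b⟩²`
with `b` a top eigenvector of `T_μ`; comparing traces of these two quadratic forms on the plane
spanned by `B` and `B₁ - B₂` gives `‖B‖² + ‖B₁ - B₂‖² / 4 ≤ λ₁ + λ₂`. Thus
`s² ≤ min (‖B‖², λ₁ + λ₂ - ‖B‖²)`, and as the two entries of the minimum add up to at least `λ₁`,
`s² λ₁ ≤ 2 ‖B‖² (λ₁ + λ₂ - ‖B‖²)`.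

The trace pairing `minner` is an inner product only on symmetric matrices; `frobVec` embeds
matrices isometrically into Euclidean space, where it becomes the ambient inner product.
-/

/- The left side is the trace of the rank-two form `⟪a, u⟫² + ⟪a, v⟫²`, the right side the sum of
the two top eigenvalues of the dominating form; both traces are computed in an orthonormal basis of
`span {u, v}`. -/
theorem sq_norm_add_sq_norm_le_of_forall_mem_span {E : Type*} [NormedAddCommGroup E]
    [InnerProductSpace ℝ E] {u v b : E} {l₀ l₁ : ℝ} (hb : ‖b‖ ≤ 1) (hl₁ : 0 ≤ l₁)
    (hl : l₁ ≤ l₀)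
    (h : ∀ a ∈ Submodule.span ℝ {u, v},
      ⟪a, u⟫ ^ 2 + ⟪a, v⟫ ^ 2 ≤ l₁ * ‖a‖ ^ 2 + (l₀ - l₁) * ⟪a, b⟫ ^ 2) :
    ‖u‖ ^ 2 + ‖v‖ ^ 2 ≤ l₀ + l₁ := by
  classical
  set K := Submodule.span ℝ ({u, v} : Set E)
  have hdim : Module.finrank ℝ K ≤ 2 :=
    (finrank_span_le_card _).trans (by simpa using Finset.card_le_two)
  have : FiniteDimensional ℝ K := FiniteDimensional.span_of_finite ℝ (Set.toFinite _)
  let e := stdOrthonormalBasis ℝ K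
  have he : Orthonormal ℝ fun k => (e k : E) := e.orthonormal.comp_linearIsometry K.subtypeₗᵢ
  have hparseval : ∀ w ∈ K, ‖w‖ ^ 2 = ∑ k, ⟪(e k : E), w⟫ ^ 2 := fun w hw => by
    simpa using (e.sum_sq_inner_right ⟨w, hw⟩).symm
  have hbessel : ∑ k, ⟪(e k : E), b⟫ ^ 2 ≤ 1 := by
    have := he.sum_inner_products_le b (s := Finset.univ)
    simp only [Real.norm_eq_abs, sq_abs] at this
    nlinarith [norm_nonneg b]
  calc ‖u‖ ^ 2 + ‖v‖ ^ 2
      = ∑ k, (⟪(e k : E), u⟫ ^ 2 + ⟪(e k : E), v⟫ ^ 2) := by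
        rw [Finset.sum_add_distrib, hparseval u (Submodule.subset_span (by simp)),
          hparseval v (Submodule.subset_span (by simp))]
    _ ≤ ∑ k, (l₁ * ‖(e k : E)‖ ^ 2 + (l₀ - l₁) * ⟪(e k : E), b⟫ ^ 2) :=
        Finset.sum_le_sum fun k _ => h _ (e k).2
    _ = l₁ * Module.finrank ℝ K + (l₀ - l₁) * ∑ k, ⟪(e k : E), b⟫ ^ 2 := by
        simp [Finset.sum_add_distrib, ← Finset.mul_sum, he.1, mul_comm]
    _ ≤ l₀ + l₁ := by
        have : (Module.finrank ℝ K : ℝ) ≤ 2 := by exact_mod_cast hdim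
        nlinarith

theorem sum_sq_mul_le_of_antitone {n : ℕ} (hn : 0 < n) (c : Fin n → ℝ) {lam : ℕ → ℝ}
    (hlam : Antitone lam) :
    ∑ i, c i ^ 2 * lam i ≤ lam 1 * ∑ i, c i ^ 2 + (lam 0 - lam 1) * c ⟨0, hn⟩ ^ 2 := by
  obtain ⟨m, rfl⟩ : ∃ m, n = m + 1 := ⟨n - 1, by omega⟩
  have htail : ∑ i : Fin m, c i.succ ^ 2 * lam (i.succ : ℕ) ≤ ∑ i : Fin m, lam 1 * c i.succ ^ 2 :=
    Finset.sum_le_sum fun i _ => by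
      rw [mul_comm]
      exact mul_le_mul_of_nonneg_right (hlam (by simp)) (sq_nonneg _)
  rw [Fin.sum_univ_succ, Fin.sum_univ_succ, mul_add, Finset.mul_sum]
  simp only [Fin.zero_eta, Fin.val_zero] at htail ⊢
  linarith

theorem sq_half_sSup_le {S : Set ℝ} {K : ℝ} (hK : 0 ≤ K) (hS : ∀ r ∈ S, 0 ≤ r ∧ r ^ 2 ≤ 4 * K) :
    (1 / 2 * sSup S) ^ 2 ≤ K := by
  have hsup_nonneg : 0 ≤ sSup S := Real.sSup_nonneg fun r hr => (hS r hr).1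
  have hsup_le : sSup S ≤ √(4 * K) :=
    Real.sSup_le (fun r hr => (le_abs_self r).trans (Real.abs_le_sqrt (hS r hr).2))
      (Real.sqrt_nonneg _)
  nlinarith [Real.sq_sqrt (by linarith : 0 ≤ 4 * K)]

/- The cases `l₀ = 0` and `f = 0` hold through the conventions `x / 0 = 0`. -/
theorem sq_div_le_of_sq_le_of_sq_le {s f l₀ l₁ : ℝ} (hl₁ : 0 ≤ l₁) (hl : l₁ ≤ l₀)
    (hf : s ^ 2 ≤ f ^ 2) (hε : s ^ 2 ≤ l₀ + l₁ - f ^ 2) :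
    (s / f) ^ 2 ≤ 4 * (l₁ / l₀ + (1 - f ^ 2 / l₀)) := by
  rcases (hl₁.trans hl).eq_or_lt with hl₀ | hl₀
  · rw [← hl₀, div_zero, div_zero, div_pow]
    linarith [div_le_one_of_le₀ hf (sq_nonneg f)]
  rcases (sq_nonneg f).eq_or_lt with hf₀ | hf₀
  · rw [div_pow, ← hf₀, div_zero, zero_div]
    have : 0 ≤ l₁ / l₀ := div_nonneg hl₁ hl₀.le
    linarith
  have hrhs : 4 * (l₁ / l₀ + (1 - f ^ 2 / l₀)) = 4 * (l₀ + l₁ - f ^ 2) / l₀ := by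
    field_simp
    ring
  rw [hrhs, div_pow, div_le_div_iff₀ hf₀ hl₀]
  nlinarith [mul_le_mul_of_nonneg_right hf (hε.trans' (sq_nonneg s)),
    mul_le_mul_of_nonneg_right hε hf₀.le, mul_nonneg (sq_nonneg s) hl₁]

section HalfMixture

variable {Ω : Type*} [MeasurableSpace Ω] {μ μ₁ μ₂ : Measure Ω} {f : Ω → ℝ}

theorem sq_integral_le_integral_sq [IsProbabilityMeasure μ] (hf : MemLp f 2 μ) :
    (∫ x, f x ∂μ) ^ 2 ≤ ∫ x, f x ^ 2 ∂μ := by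
  have := ProbabilityTheory.variance_nonneg f μ
  rw [ProbabilityTheory.variance_eq_sub hf] at this
  simpa using this

theorem MeasureTheory.Integrable.of_eq_half_add
    (hμ : μ = (2 : ℝ≥0∞)⁻¹ • μ₁ + (2 : ℝ≥0∞)⁻¹ • μ₂) (hf : Integrable f μ) :
    Integrable f μ₁ ∧ Integrable f μ₂ := by
  rwa [hμ, integrable_add_measure, integrable_smul_measure (by simp) (by simp),
    integrable_smul_measure (by simp) (by simp)] at hf

theorem integral_eq_half_add (hμ : μ = (2 : ℝ≥0∞)⁻¹ • μ₁ + (2 : ℝ≥0∞)⁻¹ • μ₂)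
    (h₁ : Integrable f μ₁) (h₂ : Integrable f μ₂) :
    ∫ x, f x ∂μ = (∫ x, f x ∂μ₁ + ∫ x, f x ∂μ₂) / 2 := by
  rw [hμ, integral_add_measure (h₁.smul_measure (by simp)) (h₂.smul_measure (by simp)),
    integral_smul_measure, integral_smul_measure]
  simp
  ring

end HalfMixture

variable {d : ℕ}

def frobVec : Matrix (Fin d) (Fin d) ℝ →ₗ[ℝ] EuclideanSpace ℝ (Fin d × Fin d) where
  toFun A := WithLp.toLp 2 fun p => A p.1 p.2
  map_add' _ _ := rfl
  map_smul' _ _ := rfl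

@[simp]
theorem frobVec_apply (A : Matrix (Fin d) (Fin d) ℝ) (p : Fin d × Fin d) :
    frobVec A p = A p.1 p.2 := rfl

theorem frobNorm_eq_norm_frobVec (M : Matrix (Fin d) (Fin d) ℝ) :
    frobNorm M = ‖frobVec M‖ := by
  simp [frobNorm, EuclideanSpace.norm_eq, Fintype.sum_prod_type]

theorem minner_eq_inner_frobVec (A : Matrix (Fin d) (Fin d) ℝ) {C : Matrix (Fin d) (Fin d) ℝ}
    (hC : C.IsSymm) : minner A C = ⟪frobVec A, frobVec C⟫ := by
  simp [minner, Matrix.trace, Matrix.mul_apply, PiLp.inner_apply, Fintype.sum_prod_type,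
    ← hC.apply, mul_comm]

theorem minner_comm (A C : Matrix (Fin d) (Fin d) ℝ) : minner A C = minner C A :=
  Matrix.trace_mul_comm A C

theorem minner_smul_right (A C : Matrix (Fin d) (Fin d) ℝ) (r : ℝ) :
    minner A (r • C) = r * minner A C := by
  simp [minner, Matrix.trace_smul]

theorem minner_sum_smul_left {ι : Type*} (s : Finset ι) (c : ι → ℝ)
    (b : ι → Matrix (Fin d) (Fin d) ℝ) (C : Matrix (Fin d) (Fin d) ℝ) :
    minner (∑ i ∈ s, c i • b i) C = ∑ i ∈ s, c i * minner (b i) C := by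
  simp [minner, Finset.sum_mul, Matrix.trace_sum, Matrix.trace_smul]

theorem minner_outer (A : Matrix (Fin d) (Fin d) ℝ) (x : EuclideanSpace ℝ (Fin d)) :
    minner A (outer x) = ∑ i, ∑ j, A i j * (x j * x i) := by
  simp [minner, Matrix.trace, Matrix.mul_apply, outer]

theorem minner_outer_outer (x y : EuclideanSpace ℝ (Fin d)) :
    minner (outer x) (outer y) = ⟪x, y⟫ ^ 2 := by
  rw [minner_outer, sq, PiLp.inner_apply, Finset.sum_mul_sum]
  refine Finset.sum_congr rfl fun i _ => Finset.sum_congr rfl fun j _ => ?_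
  simp [outer]
  ring

section Moments

variable {ν ν' : Measure (EuclideanSpace ℝ (Fin d))}

theorem memLp_two_apply_mul_apply (h4 : Integrable (fun x => ‖x‖ ^ 4) ν) (i j : Fin d) :
    MemLp (fun x : EuclideanSpace ℝ (Fin d) => x i * x j) 2 ν := by
  refine (memLp_two_iff_integrable_sq (by fun_prop)).2 <|
    h4.mono' (by fun_prop) (ae_of_all _ fun x => ?_)
  have hi := PiLp.norm_apply_le x i
  have hj := PiLp.norm_apply_le x j
  rw [Real.norm_eq_abs] at hi hj
  rw [Real.norm_eq_abs, abs_of_nonneg (sq_nonneg _), mul_pow, ← sq_abs (x i), ← sq_abs (x j)]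
  calc |x i| ^ 2 * |x j| ^ 2 ≤ ‖x‖ ^ 2 * ‖x‖ ^ 2 := by gcongr
    _ = ‖x‖ ^ 4 := by ring

theorem memLp_two_minner_outer (h4 : Integrable (fun x => ‖x‖ ^ 4) ν)
    (A : Matrix (Fin d) (Fin d) ℝ) : MemLp (fun x => minner A (outer x)) 2 ν := by
  simp_rw [minner_outer]
  exact memLp_finsetSum _ fun i _ => memLp_finsetSum _ fun j _ =>
    (memLp_two_apply_mul_apply h4 j i).const_mul _

theorem minner_mIntegral (P : Matrix (Fin d) (Fin d) ℝ)
    {F : EuclideanSpace ℝ (Fin d) → Matrix (Fin d) (Fin d) ℝ}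
    (hF : ∀ i j, Integrable (fun x => F x i j) ν) :
    minner P (mIntegral ν F) = ∫ x, minner P (F x) ∂ν := by
  have hint : ∀ i j, Integrable (fun x => P i j * F x j i) ν := fun i j => (hF j i).const_mul _
  simp only [minner, Matrix.trace, Matrix.diag, Matrix.mul_apply, mIntegral, Matrix.of_apply]
  rw [integral_finsetSum _ fun i _ => integrable_finsetSum _ fun j _ => hint i j]
  refine Finset.sum_congr rfl fun i _ => ?_
  rw [integral_finsetSum _ fun j _ => hint i j]
  simp only [integral_const_mul]

theorem minner_secondMoment [IsFiniteMeasure ν] (h4 : Integrable (fun x => ‖x‖ ^ 4) ν)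
    (A : Matrix (Fin d) (Fin d) ℝ) :
    minner A (secondMoment ν) = ∫ x, minner A (outer x) ∂ν :=
  minner_mIntegral A fun i j => (memLp_two_apply_mul_apply h4 i j).integrable one_le_two

theorem minner_fourthMomentOp (h4 : Integrable (fun x => ‖x‖ ^ 4) ν)
    (P Q : Matrix (Fin d) (Fin d) ℝ) :
    minner P (fourthMomentOp ν Q) = ∫ x, minner P (outer x) * minner Q (outer x) ∂ν := by
  rw [fourthMomentOp, minner_mIntegral (F := fun x => minner Q (outer x) • outer x) P
    fun i j => (memLp_two_minner_outer h4 Q).integrable_mul (memLp_two_apply_mul_apply h4 i j)]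
  simp only [minner_smul_right, mul_comm]

theorem secondMoment_isSymm (ν : Measure (EuclideanSpace ℝ (Fin d))) :
    (secondMoment ν).IsSymm := by
  ext i j
  simp [secondMoment, mIntegral, outer, mul_comm]

theorem minner_secondMoment_nonneg [IsFiniteMeasure ν] [IsFiniteMeasure ν']
    (h4 : Integrable (fun x => ‖x‖ ^ 4) ν) (h4' : Integrable (fun x => ‖x‖ ^ 4) ν') :
    0 ≤ minner (secondMoment ν) (secondMoment ν') := by
  rw [minner_secondMoment h4']
  refine integral_nonneg fun y => ?_
  rw [minner_comm, minner_secondMoment h4]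
  exact integral_nonneg fun x => by rw [minner_outer_outer]; positivity

end Moments

section SecondMomentSplitting

variable {μ μ₁ μ₂ : Measure (EuclideanSpace ℝ (Fin d))}

theorem secondMoment_eq_half_add [IsFiniteMeasure μ₁] [IsFiniteMeasure μ₂]
    (hμ : μ = (2 : ℝ≥0∞)⁻¹ • μ₁ + (2 : ℝ≥0∞)⁻¹ • μ₂)
    (h4₁ : Integrable (fun x => ‖x‖ ^ 4) μ₁) (h4₂ : Integrable (fun x => ‖x‖ ^ 4) μ₂) :
    secondMoment μ = (1 / 2 : ℝ) • (secondMoment μ₁ + secondMoment μ₂) := by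
  ext i j
  simp only [secondMoment, mIntegral, outer, Matrix.of_apply, Matrix.smul_apply,
    Matrix.add_apply, smul_eq_mul]
  rw [integral_eq_half_add hμ ((memLp_two_apply_mul_apply h4₁ i j).integrable one_le_two)
    ((memLp_two_apply_mul_apply h4₂ i j).integrable one_le_two)]
  ring

theorem frobNorm_sub_sq_le_four_mul_sq [IsFiniteMeasure μ₁] [IsFiniteMeasure μ₂]
    (hμ : μ = (2 : ℝ≥0∞)⁻¹ • μ₁ + (2 : ℝ≥0∞)⁻¹ • μ₂) (h4 : Integrable (fun x => ‖x‖ ^ 4) μ) :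
    frobNorm (secondMoment μ₁ - secondMoment μ₂) ^ 2 ≤ 4 * frobNorm (secondMoment μ) ^ 2 := by
  obtain ⟨h4₁, h4₂⟩ := h4.of_eq_half_add hμ
  have hcross : 0 ≤ ⟪frobVec (secondMoment μ₁), frobVec (secondMoment μ₂)⟫ := by
    rw [← minner_eq_inner_frobVec _ (secondMoment_isSymm μ₂)]
    exact minner_secondMoment_nonneg h4₁ h4₂
  rw [secondMoment_eq_half_add hμ h4₁ h4₂, frobNorm_eq_norm_frobVec, frobNorm_eq_norm_frobVec,
    map_sub, map_smul, map_add, norm_smul, mul_pow, norm_sub_sq_real, norm_add_sq_real]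
  norm_num
  linarith

theorem sq_minner_secondMoment_add_sq_le_integral [IsProbabilityMeasure μ₁]
    [IsProbabilityMeasure μ₂] (hμ : μ = (2 : ℝ≥0∞)⁻¹ • μ₁ + (2 : ℝ≥0∞)⁻¹ • μ₂)
    (h4 : Integrable (fun x => ‖x‖ ^ 4) μ) (A : Matrix (Fin d) (Fin d) ℝ) :
    minner A (secondMoment μ) ^ 2
        + minner A ((1 / 2 : ℝ) • (secondMoment μ₁ - secondMoment μ₂)) ^ 2
      ≤ ∫ x, minner A (outer x) ^ 2 ∂μ := by
  obtain ⟨h4₁, h4₂⟩ := h4.of_eq_half_add hμ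
  have hJ₁ := sq_integral_le_integral_sq (memLp_two_minner_outer h4₁ A)
  have hJ₂ := sq_integral_le_integral_sq (memLp_two_minner_outer h4₂ A)
  rw [← minner_secondMoment h4₁] at hJ₁
  rw [← minner_secondMoment h4₂] at hJ₂
  rw [integral_eq_half_add hμ (memLp_two_minner_outer h4₁ A).integrable_sq
    (memLp_two_minner_outer h4₂ A).integrable_sq, secondMoment_eq_half_add hμ h4₁ h4₂]
  simp only [minner, Matrix.mul_smul, Matrix.mul_add, Matrix.mul_sub, Matrix.trace_smul,
    Matrix.trace_add, Matrix.trace_sub, smul_eq_mul] at hJ₁ hJ₂ ⊢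
  nlinarith

end SecondMomentSplitting

section EigenSeq

variable {μ : Measure (EuclideanSpace ℝ (Fin d))} {lam : ℕ → ℝ}

theorem IsEigenSeq.nonneg (hlam : IsEigenSeq μ lam) (i : ℕ) : 0 ≤ lam i :=
  hlam.2.1 (i + d * (d + 1) / 2) le_add_self ▸ hlam.1 le_self_add

theorem IsEigenSeq.exists_integral_sq_le (hlam : IsEigenSeq μ lam) (hN : 0 < d * (d + 1) / 2)
    (h4 : Integrable (fun x => ‖x‖ ^ 4) μ) :
    ∃ b₀ : Matrix (Fin d) (Fin d) ℝ, b₀.IsSymm ∧ frobNorm b₀ = 1 ∧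
      ∀ A : Matrix (Fin d) (Fin d) ℝ, A.IsSymm → ∫ x, minner A (outer x) ^ 2 ∂μ
        ≤ lam 1 * frobNorm A ^ 2 + (lam 0 - lam 1) * minner A b₀ ^ 2 := by
  obtain ⟨hanti, -, b, hsym, horth, hspan, heig⟩ := hlam
  refine ⟨b ⟨0, hN⟩, hsym _, ?_, fun A hA => ?_⟩
  · rw [frobNorm_eq_norm_frobVec, norm_eq_sqrt_real_inner, ← minner_eq_inner_frobVec _ (hsym _),
      horth, if_pos rfl, Real.sqrt_one]
  obtain ⟨c, hc⟩ := (Submodule.mem_span_range_iff_exists_fun ℝ).1 (hspan A hA)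
  have hcoeff : ∀ j, minner A (b j) = c j := fun j => by
    simp [← hc, minner_sum_smul_left, horth]
  have hnorm : frobNorm A ^ 2 = ∑ i, c i ^ 2 := by
    rw [frobNorm_eq_norm_frobVec, ← real_inner_self_eq_norm_sq, ← minner_eq_inner_frobVec _ hA]
    nth_rewrite 1 [← hc]
    simp only [minner_sum_smul_left, minner_comm (b _) A, hcoeff, sq]
  have hint : ∀ i, Integrable (fun x => minner A (outer x) * minner (b i) (outer x)) μ :=
    fun i => (memLp_two_minner_outer h4 A).integrable_mul (memLp_two_minner_outer h4 (b i))
  have hquad : ∫ x, minner A (outer x) ^ 2 ∂μ = ∑ i, c i ^ 2 * lam i :=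
    calc ∫ x, minner A (outer x) ^ 2 ∂μ
        = ∫ x, ∑ i, c i * (minner A (outer x) * minner (b i) (outer x)) ∂μ := by
          congr 1 with x
          rw [sq]
          nth_rewrite 2 [← hc]
          rw [minner_sum_smul_left, Finset.mul_sum]
          exact Finset.sum_congr rfl fun i _ => by ring
      _ = ∑ i, c i * minner A (fourthMomentOp μ (b i)) := by
          rw [integral_finsetSum _ fun i _ => (hint i).const_mul _]
          simp only [integral_const_mul, minner_fourthMomentOp h4]
      _ = ∑ i, c i ^ 2 * lam i := by
          simp only [heig, minner_smul_right, hcoeff]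
          exact Finset.sum_congr rfl fun i _ => by ring
  rw [hquad, hnorm, hcoeff]
  exact sum_sq_mul_le_of_antitone hN c hanti

theorem frobNorm_sq_add_frobNorm_sub_sq_le {μ₁ μ₂ : Measure (EuclideanSpace ℝ (Fin d))}
    [IsProbabilityMeasure μ₁] [IsProbabilityMeasure μ₂] (hlam : IsEigenSeq μ lam)
    (hN : 0 < d * (d + 1) / 2) (h4 : Integrable (fun x => ‖x‖ ^ 4) μ)
    (hμ : μ = (2 : ℝ≥0∞)⁻¹ • μ₁ + (2 : ℝ≥0∞)⁻¹ • μ₂) :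
    frobNorm (secondMoment μ) ^ 2 + frobNorm (secondMoment μ₁ - secondMoment μ₂) ^ 2 / 4
      ≤ lam 0 + lam 1 := by
  obtain ⟨b₀, hb₀, hb₀_norm, hspec⟩ := hlam.exists_integral_sq_le hN h4
  set B := secondMoment μ
  set M := (1 / 2 : ℝ) • (secondMoment μ₁ - secondMoment μ₂)
  have hB : B.IsSymm := secondMoment_isSymm μ
  have hM : M.IsSymm := ((secondMoment_isSymm μ₁).sub (secondMoment_isSymm μ₂)).smul _
  have hM_norm : frobNorm (secondMoment μ₁ - secondMoment μ₂) ^ 2 / 4 = ‖frobVec M‖ ^ 2 := by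
    rw [frobNorm_eq_norm_frobVec, map_smul, norm_smul]
    norm_num
    ring
  rw [hM_norm, frobNorm_eq_norm_frobVec]
  refine sq_norm_add_sq_norm_le_of_forall_mem_span (b := frobVec b₀)
    (by rw [← frobNorm_eq_norm_frobVec, hb₀_norm]) (hlam.nonneg 1) (hlam.1 zero_le_one) ?_
  intro a ha
  obtain ⟨s, t, rfl⟩ := Submodule.mem_span_pair.1 ha
  have hA : (s • B + t • M).IsSymm := (hB.smul s).add (hM.smul t)
  have := (sq_minner_secondMoment_add_sq_le_integral hμ h4 (s • B + t • M)).trans (hspec _ hA)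
  rwa [minner_eq_inner_frobVec _ hB, minner_eq_inner_frobVec _ hM, minner_eq_inner_frobVec _ hb₀,
    frobNorm_eq_norm_frobVec, map_add, map_smul, map_smul] at this

end EigenSeq

theorem sep_sq_le {μ : Measure (EuclideanSpace ℝ (Fin d))} [IsProbabilityMeasure μ] {K : ℝ}
    (h : ∀ μ₁ μ₂ : Measure (EuclideanSpace ℝ (Fin d)),
      IsProbabilityMeasure μ₁ → IsProbabilityMeasure μ₂ →
      μ = (2 : ℝ≥0∞)⁻¹ • μ₁ + (2 : ℝ≥0∞)⁻¹ • μ₂ →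
      frobNorm (secondMoment μ₁ - secondMoment μ₂) ^ 2 ≤ 4 * K) :
    sep μ ^ 2 ≤ K := by
  have hK : 0 ≤ 4 * K :=
    (sq_nonneg _).trans (h μ μ inferInstance inferInstance
      (by rw [← add_smul, ENNReal.inv_two_add_inv_two, one_smul]))
  refine sq_half_sSup_le (by linarith) ?_
  rintro _ ⟨μ₁, μ₂, h₁, h₂, hμ, rfl⟩
  exact ⟨Real.sqrt_nonneg _, h μ₁ μ₂ h₁ h₂ hμ⟩

theorem sep_upper_bound_general
    (d : ℕ) (hd : 1 ≤ d) (μ : Measure (EuclideanSpace ℝ (Fin d)))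
    [IsProbabilityMeasure μ] (h4 : Integrable (fun x => ‖x‖ ^ 4) μ)
    (lam : ℕ → ℝ) (hlam : IsEigenSeq μ lam) :
    (sep μ / frobNorm (secondMoment μ)) ^ 2 ≤
      4 * (lam 1 / lam 0 + (1 - frobNorm (secondMoment μ) ^ 2 / lam 0)) := by
  have hN : 0 < d * (d + 1) / 2 := Nat.div_pos (by nlinarith) two_pos
  refine sq_div_le_of_sq_le_of_sq_le (hlam.nonneg 1) (hlam.1 zero_le_one) ?_ ?_
  · exact sep_sq_le fun μ₁ μ₂ _ _ hμ => frobNorm_sub_sq_le_four_mul_sq hμ h4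
  · exact sep_sq_le fun μ₁ μ₂ _ _ hμ => by
      linarith [frobNorm_sq_add_frobNorm_sub_sq_le hlam hN h4 hμ]

/-- upper bound on the second order separation parameter in terms of the
first and second largest eigenvalues of `T_μ`. -/
theorem sep_upper_bound
    (d : ℕ) (hd : 1 ≤ d) (μ : Measure (EuclideanSpace ℝ (Fin d)))
    [IsProbabilityMeasure μ] (h4 : Integrable (fun x => ‖x‖ ^ 4) μ)
    (hμ : μ ≠ Measure.dirac 0)
    (lam : ℕ → ℝ) (hlam : IsEigenSeq μ lam) :
    (sep μ / frobNorm (secondMoment μ)) ^ 2 ≤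
      4 * (lam 1 / lam 0 + (1 - frobNorm (secondMoment μ) ^ 2 / lam 0)) :=
  sep_upper_bound_general d hd μ h4 lam hlam

end
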